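/- arXiv:2509.04212 — 2 statements merged into one kernel-verified Lean document; each statement's English description precedes it below -/
import Mathlib

section
/- (Newman's L¹ lemma.) For n ≥ 1, let P_n(z) = (1/√n) ∑_{j=0}^{n−1} e^{iπj²/n} z^j. Then ‖P_n‖₁ = ∫_{S¹} |P_n(z)| dz → 1 as n → ∞. -/
open Filter MeasureTheory Finset

/-- The Gauss–Fresnel polynomial `P_n(z) = (1/√n) ∑_{j=0}^{n-1} e^{iπj²/n} z^j`,
evaluated at `z = e^{it}`. -/
noncomputable def gaussFresnel (n : ℕ) (t : ℝ) : ℂ :=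
  (1 / (Real.sqrt n : ℂ)) *
    ∑ j ∈ Finset.range n,
      Complex.exp (Complex.I * (Real.pi : ℂ) * (j : ℂ) ^ 2 / (n : ℂ)) *
        Complex.exp (Complex.I * (t : ℂ)) ^ j

/-!
Write `√n P_n(e^{it}) = ∑_{j<n} c_j e^{ijt}` with `c_j = e^{iπj²/n}`. Then
`n |P_n|² - n = ∑_{0<|m|<n} A_m e^{imt}`, where `A_m` is the aperiodic autocorrelation of `c`,
so by Parseval `∫ (|P_n|² - 1)² = (4π/n²) ∑_{0<m<n} |A_m|²`. For the Gauss coefficients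
`A_m` is `e^{iπm²/n}` times a geometric sum of `ω = e^{2πim/n}` with `n - m` terms, which gives
`|A_m| ≤ min (2k, n/(2k))` with `k = min (m, n - m)`; hence `∑ |A_m|² = O(n^{3/2})` and
`∫ (|P_n|² - 1)² = O(n^{-1/2})`. Finally `|y - 1| ≤ |y² - 1|` for `y ≥ 0`, so the mean of
`|P_n|` tends to `1`.
-/

section

open Complex ComplexConjugate

lemma mul_conj_zpow_of_norm_eq_one {z : ℂ} (hz : ‖z‖ = 1) (m r : ℤ) :
    z ^ m * conj (z ^ r) = z ^ (m - r) := by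
  have hz0 : z ≠ 0 := norm_ne_zero_iff.mp (by rw [hz]; exact one_ne_zero)
  rw [map_zpow₀, ← inv_eq_conj hz, inv_zpow', zpow_sub₀ hz0, div_eq_mul_inv, zpow_neg]

lemma continuous_exp_I_mul_zpow (m : ℤ) : Continuous fun t : ℝ => cexp (I * t) ^ m :=
  (continuous_const.mul continuous_ofReal).cexp.zpow₀ m fun _ => Or.inl (exp_ne_zero _)

lemma integral_exp_I_mul_zpow (m : ℤ) :
    ∫ t in (0 : ℝ)..2 * Real.pi, cexp (I * t) ^ m
      = if m = 0 then 2 * (Real.pi : ℂ) else 0 := by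
  split_ifs with hm
  · simp [hm]
  · have hc : (m : ℂ) * I ≠ 0 := mul_ne_zero (Int.cast_ne_zero.mpr hm) I_ne_zero
    simp_rw [← exp_int_mul, ← mul_assoc]
    rw [integral_exp_mul_complex hc]
    have : cexp (m * I * (2 * Real.pi)) = 1 := by
      rw [← exp_int_mul_two_pi_mul_I m]; ring_nf
    simp [this]

lemma integral_norm_sq_sum_mul_exp_I_mul_zpow (S : Finset ℤ) (a : ℤ → ℂ) :
    ∫ t in (0 : ℝ)..2 * Real.pi, ‖∑ m ∈ S, a m * cexp (I * t) ^ m‖ ^ 2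
      = 2 * Real.pi * ∑ m ∈ S, ‖a m‖ ^ 2 := by
  have hexpand : ∀ t : ℝ, ((‖∑ m ∈ S, a m * cexp (I * t) ^ m‖ ^ 2 : ℝ) : ℂ)
      = ∑ m ∈ S, ∑ r ∈ S, a m * conj (a r) * cexp (I * t) ^ (m - r) := by
    intro t
    rw [Complex.ofReal_pow, ← mul_conj', map_sum, sum_mul_sum]
    refine sum_congr rfl fun m _ => sum_congr rfl fun r _ => ?_
    rw [← mul_conj_zpow_of_norm_eq_one (norm_exp_I_mul_ofReal t), map_mul]
    ring
  have hint : ∀ k : ℤ, ∀ b : ℂ,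
      IntervalIntegrable (fun t : ℝ => b * cexp (I * t) ^ k) volume 0 (2 * Real.pi) :=
    fun k b => (continuous_const.mul (continuous_exp_I_mul_zpow k)).intervalIntegrable _ _
  apply Complex.ofReal_injective
  rw [← intervalIntegral.integral_ofReal]
  simp_rw [hexpand]
  rw [intervalIntegral.integral_finsetSum fun m _ => by
    simpa only [sum_fn] using IntervalIntegrable.sum S fun r _ => hint (m - r) (a m * conj (a r))]
  simp_rw [intervalIntegral.integral_finsetSum fun r _ => hint _ _,
    intervalIntegral.integral_const_mul, integral_exp_I_mul_zpow, sub_eq_zero,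
    mul_ite, mul_zero, sum_ite_eq, mul_conj']
  push_cast
  rw [mul_sum]
  exact sum_congr rfl fun m hm => by rw [if_pos hm, mul_comm]

noncomputable def autocorr (c : ℕ → ℂ) (n : ℕ) (m : ℤ) : ℂ :=
  ∑ p ∈ range n ×ˢ range n with (p.1 : ℤ) - p.2 = m, c p.1 * conj (c p.2)

lemma autocorr_zero (c : ℕ → ℂ) (n : ℕ) :
    autocorr c n 0 = ∑ j ∈ range n, (‖c j‖ ^ 2 : ℂ) := by
  rw [autocorr, sum_filter, sum_product]
  refine sum_congr rfl fun j hj => ?_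
  simp_rw [sub_eq_zero, Nat.cast_inj]
  rw [sum_ite_eq, if_pos hj, mul_conj']

lemma autocorr_neg (c : ℕ → ℂ) (n : ℕ) (m : ℤ) :
    autocorr c n (-m) = conj (autocorr c n m) := by
  rw [autocorr, autocorr, map_sum]
  refine sum_nbij' Prod.swap Prod.swap ?_ ?_ (fun _ _ => rfl) (fun _ _ => rfl) ?_
  · intro p hp
    simp only [mem_filter, mem_product, Prod.fst_swap, Prod.snd_swap] at hp ⊢
    exact ⟨hp.1.symm, by omega⟩
  · intro p hp
    simp only [mem_filter, mem_product, Prod.fst_swap, Prod.snd_swap] at hp ⊢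
    exact ⟨hp.1.symm, by omega⟩
  · intro p _
    simp [mul_comm]

lemma autocorr_natCast (c : ℕ → ℂ) {n m : ℕ} (hm : m ≤ n) :
    autocorr c n m = ∑ k ∈ range (n - m), c (k + m) * conj (c k) := by
  symm
  refine sum_nbij' (fun k => (k + m, k)) Prod.snd ?_ ?_ ?_ ?_ (fun _ _ => rfl)
  · intro k hk
    simp only [mem_filter, mem_product, mem_range] at hk ⊢
    exact ⟨⟨by omega, by omega⟩, by push_cast; ring⟩
  · intro p hp
    simp only [mem_filter, mem_product, mem_range] at hp ⊢
    omega
  · intro k _; rfl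
  · intro p hp
    simp only [mem_filter, mem_product, mem_range] at hp
    ext <;> simp; omega

lemma norm_sq_sum_mul_pow (c : ℕ → ℂ) {n N : ℕ} (hN : n ≤ N + 1) {z : ℂ}
    (hz : ‖z‖ = 1) :
    ((‖∑ j ∈ range n, c j * z ^ j‖ ^ 2 : ℝ) : ℂ)
      = ∑ m ∈ Icc (-N : ℤ) N, autocorr c n m * z ^ m := by
  have hmaps : ∀ p ∈ range n ×ˢ range n, (p.1 : ℤ) - p.2 ∈ Icc (-N : ℤ) N := by
    intro p hp
    simp only [mem_product, mem_range] at hp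
    simp only [mem_Icc]
    omega
  rw [Complex.ofReal_pow, ← mul_conj', map_sum, sum_mul_sum, ← sum_product',
    ← sum_fiberwise_of_maps_to hmaps]
  refine sum_congr rfl fun m _ => ?_
  rw [autocorr, sum_mul]
  refine sum_congr rfl fun p hp => ?_
  rw [(mem_filter.mp hp).2.symm, ← mul_conj_zpow_of_norm_eq_one hz, map_mul]
  simp only [zpow_natCast]
  ring

lemma integral_sq_norm_sq_sum_mul_exp_I_mul_pow_sub (c : ℕ → ℂ) (n : ℕ) :
    ∫ t in (0 : ℝ)..2 * Real.pi,
        (‖∑ j ∈ range n, c j * cexp (I * t) ^ j‖ ^ 2 - ∑ j ∈ range n, ‖c j‖ ^ 2) ^ 2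
      = 4 * Real.pi * ∑ m ∈ Ico 1 n, ‖autocorr c n m‖ ^ 2 := by
  set S := (Icc (-(n - 1 : ℕ) : ℤ) (n - 1 : ℕ)).erase 0
  have h0 : (0 : ℤ) ∈ Icc (-(n - 1 : ℕ) : ℤ) (n - 1 : ℕ) := by simp
  have hpt : ∀ t : ℝ,
      (‖∑ j ∈ range n, c j * cexp (I * t) ^ j‖ ^ 2 - ∑ j ∈ range n, ‖c j‖ ^ 2) ^ 2
        = ‖∑ m ∈ S, autocorr c n m * cexp (I * t) ^ m‖ ^ 2 := by
    intro t
    have hexp := norm_sq_sum_mul_pow c (by omega : n ≤ n - 1 + 1) (norm_exp_I_mul_ofReal t)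
    rw [← add_sum_erase _ _ h0, zpow_zero, mul_one, autocorr_zero, ← sub_eq_iff_eq_add'] at hexp
    rw [← hexp, ← sq_abs, ← Real.norm_eq_abs, ← Complex.norm_real]
    push_cast
    rfl
  have heven : Function.Even fun m : ℤ => ‖autocorr c n m‖ ^ 2 := fun m => by
    simp only [autocorr_neg, RCLike.norm_conj]
  rw [intervalIntegral.integral_congr fun t _ => hpt t, integral_norm_sq_sum_mul_exp_I_mul_zpow,
    sum_erase_eq_sub h0, sum_Icc_of_even_eq_range heven, sum_range_succ', sum_Ico_eq_sum_range]
  simp only [Nat.cast_zero, Nat.cast_add, Nat.cast_one, add_comm 1]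
  ring

noncomputable def gaussCoeff (n j : ℕ) : ℂ :=
  cexp (I * (Real.pi : ℂ) * (j : ℂ) ^ 2 / (n : ℂ))

lemma gaussFresnel_eq (n : ℕ) (t : ℝ) :
    gaussFresnel n t
      = (1 / (Real.sqrt n : ℂ)) * ∑ j ∈ range n, gaussCoeff n j * cexp (I * t) ^ j :=
  rfl

lemma norm_gaussCoeff (n j : ℕ) : ‖gaussCoeff n j‖ = 1 := by
  rw [gaussCoeff, show I * (Real.pi : ℂ) * (j : ℂ) ^ 2 / (n : ℂ)
    = I * ((Real.pi * j ^ 2 / n : ℝ) : ℂ) by push_cast; ring]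
  exact norm_exp_I_mul_ofReal _

lemma gaussCoeff_add_mul_conj (n m k : ℕ) :
    gaussCoeff n (k + m) * conj (gaussCoeff n k)
      = gaussCoeff n m * cexp (I * (2 * Real.pi * m / n : ℝ)) ^ k := by
  simp only [gaussCoeff, ← exp_conj, ← exp_nat_mul, ← exp_add, map_div₀, map_mul, map_pow,
    conj_I, conj_ofReal, map_natCast]
  congr 1
  push_cast
  ring

lemma norm_autocorr_gaussCoeff {n m : ℕ} (hm : m ≤ n) :
    ‖autocorr (gaussCoeff n) n m‖
      = ‖∑ k ∈ range (n - m), cexp (I * (2 * Real.pi * m / n : ℝ)) ^ k‖ := by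
  simp_rw [autocorr_natCast _ hm, gaussCoeff_add_mul_conj, ← mul_sum, norm_mul, norm_gaussCoeff,
    one_mul]

lemma two_mul_min_div_le_sin_pi_mul_div {n m : ℕ} (hm : m < n) :
    2 * (min m (n - m) : ℕ) / n ≤ Real.sin (Real.pi * m / n) := by
  have hn : (0 : ℝ) < n := by exact_mod_cast (show 0 < n by omega)
  have hsym : Real.sin (Real.pi * m / n) = Real.sin (Real.pi * (min m (n - m) : ℕ) / n) := by
    rcases le_total m (n - m) with h | h
    · rw [min_eq_left h]
    · rw [min_eq_right h, Nat.cast_sub hm.le, ← Real.sin_pi_sub]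
      congr 1
      field_simp
  have hk : (2 : ℝ) * (min m (n - m) : ℕ) ≤ n := by
    exact_mod_cast (show 2 * min m (n - m) ≤ n by omega)
  rw [hsym]
  calc 2 * ((min m (n - m) : ℕ) : ℝ) / n
      = 2 / Real.pi * (Real.pi * (min m (n - m) : ℕ) / n) := by field_simp
    _ ≤ _ := Real.mul_le_sin (by positivity) (by
        rw [div_le_div_iff₀ hn two_pos]; nlinarith [Real.pi_pos])

lemma four_mul_min_div_le_norm_exp_sub_one {n m : ℕ} (hm : m < n) :
    4 * (min m (n - m) : ℕ) / n ≤ ‖cexp (I * (2 * Real.pi * m / n : ℝ)) - 1‖ := by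
  have hsin := two_mul_min_div_le_sin_pi_mul_div hm
  rw [norm_exp_I_mul_ofReal_sub_one, norm_mul, Real.norm_two, Real.norm_eq_abs,
    show 2 * Real.pi * m / n / 2 = Real.pi * m / n by ring]
  have h4 : 4 * ((min m (n - m) : ℕ) : ℝ) / n = 2 * (2 * (min m (n - m) : ℕ) / n) := by ring
  linarith [le_abs_self (Real.sin (Real.pi * m / n))]

/-- Since `ω = exp (2πi m / n)` satisfies `ω ^ n = 1`, `‖ω ^ (n - m) - 1‖ = ‖ω ^ m - 1‖`,
and `ω ^ m = exp (2πi m² / n)`. -/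
lemma norm_exp_pow_sub_sub_one_le {n m : ℕ} (hm : m ≤ n) :
    ‖cexp (I * (2 * Real.pi * m / n : ℝ)) ^ (n - m) - 1‖ ≤ 2 * Real.pi * m ^ 2 / n := by
  set ω := cexp (I * (2 * Real.pi * m / n : ℝ))
  rcases Nat.eq_zero_or_pos n with rfl | hn
  · simp
  have hn0 : (n : ℂ) ≠ 0 := by exact_mod_cast hn.ne'
  have hωm : ω ^ m = cexp (I * (2 * Real.pi * m ^ 2 / n : ℝ)) := by
    rw [← exp_nat_mul]; congr 1; push_cast; ring
  have hωn : ω ^ (n - m) * ω ^ m = 1 := by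
    rw [← pow_add, Nat.sub_add_cancel hm, ← exp_nat_mul, ← exp_int_mul_two_pi_mul_I m]
    congr 1; push_cast; field_simp
  calc ‖ω ^ (n - m) - 1‖ = ‖ω ^ (n - m)‖ * ‖ω ^ m - 1‖ := by
        rw [← norm_mul, mul_sub, hωn, mul_one, norm_sub_rev]
    _ ≤ ‖(2 * Real.pi * m ^ 2 / n : ℝ)‖ := by
        rw [norm_pow, norm_exp_I_mul_ofReal, one_pow, one_mul, hωm]
        exact Real.norm_exp_I_mul_ofReal_sub_one_le
    _ = 2 * Real.pi * m ^ 2 / n := Real.norm_of_nonneg (by positivity)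

lemma norm_autocorr_gaussCoeff_le {n m : ℕ} (h0 : 0 < m) (hm : m < n) :
    ‖autocorr (gaussCoeff n) n m‖ ≤ 2 * (min m (n - m) : ℕ) ∧
      ‖autocorr (gaussCoeff n) n m‖ ≤ n / (2 * (min m (n - m) : ℕ)) := by
  set k := min m (n - m)
  set ω := cexp (I * (2 * Real.pi * m / n : ℝ))
  have hn : (0 : ℝ) < n := by exact_mod_cast (show 0 < n by omega)
  have hk : (0 : ℝ) < k := by exact_mod_cast (show 0 < k by omega)
  have hω : ‖ω‖ = 1 := norm_exp_I_mul_ofReal _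
  have hω1 : 4 * k / n ≤ ‖ω - 1‖ := four_mul_min_div_le_norm_exp_sub_one hm
  have hpos : 0 < ‖ω - 1‖ := lt_of_lt_of_le (by positivity) hω1
  have hgeom : ‖∑ j ∈ range (n - m), ω ^ j‖ = ‖ω ^ (n - m) - 1‖ / ‖ω - 1‖ := by
    rw [geom_sum_eq (sub_ne_zero.mp (norm_pos_iff.mp hpos)), norm_div]
  rw [norm_autocorr_gaussCoeff hm.le]
  refine ⟨?_, ?_⟩
  · rcases le_total m (n - m) with h | h
    · rw [hgeom, div_le_iff₀ hpos]
      calc ‖ω ^ (n - m) - 1‖ ≤ 2 * Real.pi * m ^ 2 / n := norm_exp_pow_sub_sub_one_le hm.le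
        _ ≤ 2 * k * (4 * k / n) := by
            rw [show k = m from min_eq_left h, div_le_iff₀ hn]
            field_simp
            nlinarith [Real.pi_lt_four]
        _ ≤ 2 * k * ‖ω - 1‖ := by gcongr
    · calc ‖∑ j ∈ range (n - m), ω ^ j‖
          ≤ ∑ j ∈ range (n - m), ‖ω ^ j‖ := norm_sum_le _ _
        _ = k := by simp [hω, k, min_eq_right h]
        _ ≤ 2 * k := by linarith
  · rw [hgeom, div_le_div_iff₀ hpos (by positivity)]
    calc ‖ω ^ (n - m) - 1‖ * (2 * k) ≤ 2 * (2 * k) := by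
          gcongr
          exact (norm_sub_le _ _).trans (by rw [norm_pow, hω, one_pow, norm_one]; norm_num)
      _ = n * (4 * k / n) := by field_simp; ring
      _ ≤ n * ‖ω - 1‖ := by gcongr

lemma sum_Ico_min_sq_le (n : ℕ) :
    ∑ m ∈ Ico 1 n, min (4 * (m : ℝ) ^ 2) ((n : ℝ) ^ 2 / (4 * m ^ 2))
      ≤ 5 * n * Real.sqrt n := by
  set K := Nat.sqrt n
  have hK : (K : ℝ) ≤ Real.sqrt n := Real.nat_sqrt_le_real_sqrt
  have hK1 : Real.sqrt n < K + 1 := Real.real_sqrt_lt_nat_sqrt_succ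
  have hsq : Real.sqrt n ^ 2 = n := Real.sq_sqrt (Nat.cast_nonneg n)
  have hsplit : Ico 1 n ⊆ Icc 1 K ∪ Ioo K n := by
    intro m hm
    simp only [mem_Ico, mem_union, mem_Icc, mem_Ioo] at hm ⊢
    omega
  have hdisj : Disjoint (Icc 1 K) (Ioo K n) := by
    rw [disjoint_left]
    intro m h1 h2
    simp only [mem_Icc, mem_Ioo] at h1 h2
    omega
  have hsmall : ∑ m ∈ Icc 1 K, min (4 * (m : ℝ) ^ 2) ((n : ℝ) ^ 2 / (4 * m ^ 2))
      ≤ 4 * n * Real.sqrt n := by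
    calc _ ≤ ∑ m ∈ Icc 1 K, 4 * (K : ℝ) ^ 2 := sum_le_sum fun m hm => by
            have : (m : ℝ) ≤ K := by exact_mod_cast (mem_Icc.mp hm).2
            exact (min_le_left _ _).trans (by gcongr)
      _ = 4 * (K : ℝ) ^ 3 := by simp; ring
      _ ≤ 4 * Real.sqrt n ^ 3 := by gcongr
      _ = 4 * n * Real.sqrt n := by rw [pow_succ, hsq]; ring
  have hlarge : ∑ m ∈ Ioo K n, min (4 * (m : ℝ) ^ 2) ((n : ℝ) ^ 2 / (4 * m ^ 2))
      ≤ n * Real.sqrt n := by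
    calc _ ≤ ∑ m ∈ Ioo K n, (n : ℝ) ^ 2 / 4 * ((m : ℝ) ^ 2)⁻¹ := sum_le_sum fun m _ =>
            (min_le_right _ _).trans_eq (by field_simp)
      _ ≤ (n : ℝ) ^ 2 / 4 * (2 / (K + 1)) := by
          rw [← mul_sum]; gcongr; exact sum_Ioo_inv_sq_le K n
      _ ≤ n * Real.sqrt n := by
          rw [show (n : ℝ) ^ 2 / 4 * (2 / (K + 1)) = n * (n / (2 * (K + 1))) by field_simp; ring]
          gcongr
          rw [div_le_iff₀ (by positivity)]
          nlinarith [mul_le_mul_of_nonneg_left hK1.le (Real.sqrt_nonneg n)]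
  calc _ ≤ ∑ m ∈ Icc 1 K ∪ Ioo K n, min (4 * (m : ℝ) ^ 2) ((n : ℝ) ^ 2 / (4 * m ^ 2)) :=
        sum_le_sum_of_subset_of_nonneg hsplit fun m _ _ => by positivity
    _ ≤ 5 * n * Real.sqrt n := by rw [sum_union hdisj]; linarith

lemma sum_Ico_apply_min_le {g : ℕ → ℝ} (hg : ∀ k, 0 ≤ g k) (n : ℕ) :
    ∑ m ∈ Ico 1 n, g (min m (n - m)) ≤ 2 * ∑ m ∈ Ico 1 n, g m := by
  have hreflect : ∑ m ∈ Ico 1 n, g (n - m) = ∑ m ∈ Ico 1 n, g m := by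
    rw [sum_Ico_reflect g 1 (Nat.le_succ n), Nat.add_sub_cancel, Nat.add_sub_cancel_left]
  calc _ ≤ ∑ m ∈ Ico 1 n, (g m + g (n - m)) := sum_le_sum fun m _ => by
          rcases min_choice m (n - m) with h | h <;> rw [h] <;> linarith [hg m, hg (n - m)]
    _ = 2 * ∑ m ∈ Ico 1 n, g m := by rw [sum_add_distrib, hreflect]; ring

lemma sum_Ico_sq_le_of_le_min {n : ℕ} {a : ℕ → ℝ} (ha : ∀ m ∈ Ico 1 n,
      0 ≤ a m ∧ a m ≤ 2 * (min m (n - m) : ℕ) ∧ a m ≤ n / (2 * (min m (n - m) : ℕ))) :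
    ∑ m ∈ Ico 1 n, a m ^ 2 ≤ 10 * n * Real.sqrt n := by
  set g : ℕ → ℝ := fun k => min (4 * (k : ℝ) ^ 2) ((n : ℝ) ^ 2 / (4 * k ^ 2))
  calc _ ≤ ∑ m ∈ Ico 1 n, g (min m (n - m)) := sum_le_sum fun m hm => by
          obtain ⟨h0, h1, h2⟩ := ha m hm
          refine le_min ?_ ?_
          · nlinarith
          · calc a m ^ 2 ≤ (n / (2 * (min m (n - m) : ℕ) : ℝ)) ^ 2 := by gcongr
              _ = _ := by ring
    _ ≤ 2 * ∑ m ∈ Ico 1 n, g m := sum_Ico_apply_min_le (fun k => by positivity) n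
    _ ≤ 10 * n * Real.sqrt n := by linarith [sum_Ico_min_sq_le n]

lemma integral_sq_norm_sq_gaussFresnel_sub_one_le {n : ℕ} (hn : 0 < n) :
    ∫ t in (0 : ℝ)..2 * Real.pi, (‖gaussFresnel n t‖ ^ 2 - 1) ^ 2
      ≤ 40 * Real.pi / Real.sqrt n := by
  have hnR : (0 : ℝ) < n := by exact_mod_cast hn
  have hcoeff : ∑ j ∈ range n, ‖gaussCoeff n j‖ ^ 2 = n := by simp [norm_gaussCoeff]
  have hpt : ∀ t : ℝ, (‖gaussFresnel n t‖ ^ 2 - 1) ^ 2 = (n ^ 2 : ℝ)⁻¹ *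
      (‖∑ j ∈ range n, gaussCoeff n j * cexp (I * t) ^ j‖ ^ 2
        - ∑ j ∈ range n, ‖gaussCoeff n j‖ ^ 2) ^ 2 := by
    intro t
    rw [gaussFresnel_eq, norm_mul, hcoeff, norm_div, norm_one, Complex.norm_real,
      Real.norm_of_nonneg (Real.sqrt_nonneg _), mul_pow, div_pow, Real.sq_sqrt hnR.le]
    field_simp
  rw [intervalIntegral.integral_congr fun t _ => hpt t, intervalIntegral.integral_const_mul,
    integral_sq_norm_sq_sum_mul_exp_I_mul_pow_sub]
  calc (n ^ 2 : ℝ)⁻¹ * (4 * Real.pi * ∑ m ∈ Ico 1 n, ‖autocorr (gaussCoeff n) n m‖ ^ 2)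
      ≤ (n ^ 2 : ℝ)⁻¹ * (4 * Real.pi * (10 * n * Real.sqrt n)) := by
        gcongr
        exact sum_Ico_sq_le_of_le_min fun m hm =>
          ⟨norm_nonneg _, norm_autocorr_gaussCoeff_le (mem_Ico.mp hm).1 (mem_Ico.mp hm).2⟩
    _ = 40 * Real.pi / Real.sqrt n := by
        have hs : 0 < Real.sqrt n := Real.sqrt_pos.mpr hnR
        field_simp
        rw [Real.sq_sqrt hnR.le]
        ring

lemma tendsto_integral_sq_norm_sq_gaussFresnel_sub_one :
    Tendsto (fun n : ℕ => ∫ t in (0 : ℝ)..2 * Real.pi, (‖gaussFresnel n t‖ ^ 2 - 1) ^ 2)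
      atTop (nhds 0) := by
  have hbound : Tendsto (fun n : ℕ => 40 * Real.pi / Real.sqrt n) atTop (nhds 0) :=
    tendsto_const_nhds.div_atTop (Real.tendsto_sqrt_atTop.comp tendsto_natCast_atTop_atTop)
  refine tendsto_of_tendsto_of_tendsto_of_le_of_le' tendsto_const_nhds hbound
    (Eventually.of_forall fun n => ?_) ((eventually_gt_atTop 0).mono fun n hn => ?_)
  · exact intervalIntegral.integral_nonneg (by positivity) fun t _ => sq_nonneg _
  · exact integral_sq_norm_sq_gaussFresnel_sub_one_le hn

end

lemma abs_sub_one_le_add_sq_sub_one_div {y δ : ℝ} (hy : 0 ≤ y) (hδ : 0 < δ) :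
    |y - 1| ≤ δ + (y ^ 2 - 1) ^ 2 / δ := by
  have h1 : |y - 1| ≤ |y ^ 2 - 1| := by
    rw [show y ^ 2 - 1 = (y - 1) * (y + 1) by ring, abs_mul]
    nlinarith [abs_nonneg (y - 1), le_abs_self (y + 1)]
  have h2 : 2 * |y ^ 2 - 1| ≤ δ + (y ^ 2 - 1) ^ 2 / δ := by
    rw [← sq_abs (y ^ 2 - 1), ← sub_nonneg,
      show δ + |y ^ 2 - 1| ^ 2 / δ - 2 * |y ^ 2 - 1| = (δ - |y ^ 2 - 1|) ^ 2 / δ by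
        field_simp; ring]
    positivity
  linarith [abs_nonneg (y ^ 2 - 1)]

lemma abs_integral_sub_le {a b δ : ℝ} (hab : a ≤ b) (hδ : 0 < δ) {φ : ℝ → ℝ}
    (hφ : Continuous φ) (hφ0 : ∀ x, 0 ≤ φ x) :
    |(∫ x in a..b, φ x) - (b - a)|
      ≤ δ * (b - a) + (∫ x in a..b, (φ x ^ 2 - 1) ^ 2) / δ := by
  have hsq : Continuous fun x => (φ x ^ 2 - 1) ^ 2 := by fun_prop
  calc |(∫ x in a..b, φ x) - (b - a)| = |∫ x in a..b, (φ x - 1)| := by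
        rw [intervalIntegral.integral_sub (hφ.intervalIntegrable _ _) intervalIntegrable_const,
          intervalIntegral.integral_const, smul_eq_mul, mul_one]
    _ ≤ ∫ x in a..b, |φ x - 1| := intervalIntegral.abs_integral_le_integral_abs hab
    _ ≤ ∫ x in a..b, (δ + (φ x ^ 2 - 1) ^ 2 / δ) :=
        intervalIntegral.integral_mono_on hab
          ((hφ.sub continuous_const).abs.intervalIntegrable _ _)
          ((continuous_const.add (hsq.div_const δ)).intervalIntegrable _ _)
          fun x _ => abs_sub_one_le_add_sq_sub_one_div (hφ0 x) hδ
    _ = δ * (b - a) + (∫ x in a..b, (φ x ^ 2 - 1) ^ 2) / δ := by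
        rw [intervalIntegral.integral_add intervalIntegrable_const
          ((hsq.div_const δ).intervalIntegrable _ _), intervalIntegral.integral_const,
          intervalIntegral.integral_div, smul_eq_mul, mul_comm]

lemma tendsto_integral_of_tendsto_integral_sq_sub_one {ι : Type*} {l : Filter ι} {a b : ℝ}
    (hab : a ≤ b) {φ : ι → ℝ → ℝ} (hφ : ∀ i, Continuous (φ i))
    (hφ0 : ∀ i x, 0 ≤ φ i x)
    (h : Tendsto (fun i => ∫ x in a..b, (φ i x ^ 2 - 1) ^ 2) l (nhds 0)) :
    Tendsto (fun i => ∫ x in a..b, φ i x) l (nhds (b - a)) := by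
  rw [Metric.tendsto_nhds]
  intro ε hε
  set δ := ε / (2 * (b - a + 1))
  have hδ : 0 < δ := by positivity
  have hδε : δ * (b - a) < ε / 2 := by
    rw [div_mul_eq_mul_div, div_lt_iff₀ (by positivity)]
    nlinarith
  filter_upwards [(Metric.tendsto_nhds.mp h) (δ * (ε / 2)) (by positivity)] with i hi
  rw [Real.dist_eq, sub_zero, abs_of_nonneg (intervalIntegral.integral_nonneg hab
    fun x _ => sq_nonneg _)] at hi
  rw [Real.dist_eq]
  calc _ ≤ δ * (b - a) + (∫ x in a..b, (φ i x ^ 2 - 1) ^ 2) / δ :=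
        abs_integral_sub_le hab hδ (hφ i) (hφ0 i)
    _ < ε / 2 + ε / 2 := add_lt_add hδε (by rwa [div_lt_iff₀ hδ, mul_comm])
    _ = ε := add_halves ε

/-- **Newman's `L¹` lemma.** The `L¹` norms of the Gauss–Fresnel
polynomials tend to `1`: `∫_{S¹} |P_n(z)| dz → 1` as `n → ∞`. -/
theorem statement17 :
    Tendsto
      (fun n : ℕ =>
        (1 / (2 * Real.pi)) *
          ∫ t in (0:ℝ)..(2 * Real.pi), ‖gaussFresnel n t‖)
      atTop (nhds 1) := by
  have hcont : ∀ n, Continuous fun t => ‖gaussFresnel n t‖ := fun n => by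
    unfold gaussFresnel; fun_prop
  have h := tendsto_integral_of_tendsto_integral_sq_sub_one (by positivity) hcont
    (fun _ _ => norm_nonneg _) tendsto_integral_sq_norm_sq_gaussFresnel_sub_one
  convert h.const_mul (1 / (2 * Real.pi)) using 2
  rw [sub_zero, one_div, inv_mul_cancel₀ (by positivity)]
end

section
/- There exists an absolute constant C > 1 such that for every sequence (c_j)_{j≥0} of complex numbers of modulus 1 and every n ∈ ℕ there exists m ≥ n with ‖∑_{j=0}^{m−1} c_j z^j‖₄ > C √m, where the L⁴ norm is taken over the unit circle with normalized Lebesgue measure. -/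
/-!
Let `ρ_m(k) = ∑_{j < m - k} c_j conj c_{j+k}` be the aperiodic autocorrelations of `(c_j)_{j<m}`.
By Parseval `‖P_m‖₄⁴ = m² + 2 ∑_{0<k<m} |ρ_m(k)|²`, so if the claim fails for `C⁴ = 201/200`, then
`∑_{0<k<m} |ρ_m(k)|² ≤ m²/400` for all large `m`. Now expand `∫ |P_N|² |P_M|²` (`N ≤ M`) in two
ways. Through the autocorrelations of `P_N` and `P_M` and Cauchy–Schwarz it is at least about `NM`.
Through Parseval for `P_N · conj P_M` it is `N² + ∑_{k=1}^{M-N} |∑_{j<N} c_j conj c_{j+k}|²` up to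
autocorrelation energies. Hence every window of length `N` correlates with its shifts with energy
at least about `N (M - N)`, and summing over `N ∈ [M/4, M/2)` gives `≫ M³`. But
`∑_{j<N} c_j conj c_{j+k} = ρ_{N+k}(k)`, so the same total is at most `∑_{m ≤ M} m²/400 ≤ M³/400`.
-/

open Finset ComplexConjugate Complex

def additiveQuadruples (N₁ N₂ M₁ M₂ : ℕ) : Finset ((ℕ × ℕ) × ℕ × ℕ) :=
  ((range N₁ ×ˢ range N₂) ×ˢ range M₁ ×ˢ range M₂).filter
    fun q => q.1.1 + q.2.1 = q.1.2 + q.2.2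

theorem sum_additiveQuadruples {R : Type*} [NonUnitalNonAssocSemiring R] (f g : ℕ → ℕ → R)
    (N₁ N₂ M₁ M₂ : ℕ) :
    ∑ q ∈ additiveQuadruples N₁ N₂ M₁ M₂, f q.1.1 q.1.2 * g q.2.1 q.2.2 =
      ∑ d ∈ range N₁, (∑ j ∈ range (min (N₁ - d) N₂), f (j + d) j) *
          ∑ j ∈ range (min M₁ (M₂ - d)), g j (j + d) +
        ∑ d ∈ Ico 1 N₂, (∑ j ∈ range (min N₁ (N₂ - d)), f j (j + d)) *
          ∑ j ∈ range (min (M₁ - d) M₂), g (j + d) j := by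
  rw [← sum_filter_add_sum_filter_not _ fun q => q.1.2 ≤ q.1.1]
  simp_rw [sum_mul_sum, ← sum_product']
  rw [sum_sigma', sum_sigma']
  -- `d = q.1.1 - q.1.2 = q.2.2 - q.2.1`, split by its sign
  refine congrArg₂ (· + ·)
    (sum_nbij' (fun x : Σ _ : ℕ, ℕ × ℕ => ((x.2.1 + x.1, x.2.1), x.2.2, x.2.2 + x.1))
      (fun q => ⟨q.1.1 - q.1.2, q.1.2, q.2.1⟩) ?_ ?_ ?_ ?_ fun _ _ => rfl).symm
    (sum_nbij' (fun x : Σ _ : ℕ, ℕ × ℕ => ((x.2.1, x.2.1 + x.1), x.2.2 + x.1, x.2.2))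
      (fun q => ⟨q.1.2 - q.1.1, q.1.1, q.2.2⟩) ?_ ?_ ?_ ?_ fun _ _ => rfl).symm
  all_goals
    first
    | rintro (⟨d, j, k⟩ : Σ _ : ℕ, ℕ × ℕ) h
    | rintro ⟨⟨a, a'⟩, b, b'⟩ h
    simp only [additiveQuadruples, mem_filter, mem_product, mem_range, mem_sigma, mem_Ico,
      Sigma.ext_iff, Prod.ext_iff, heq_eq_eq, lt_min_iff, and_true, true_and] at h ⊢
    omega

noncomputable def corr (c : ℕ → ℂ) (k t : ℕ) : ℂ :=
  ∑ j ∈ range t, c j * conj (c (j + k))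

theorem conj_corr (c : ℕ → ℂ) (k t : ℕ) :
    conj (corr c k t) = ∑ j ∈ range t, c (j + k) * conj (c j) := by
  simp [corr, mul_comm]

theorem corr_zero {c : ℕ → ℂ} (hc : ∀ j, ‖c j‖ = 1) (t : ℕ) : corr c 0 t = t := by
  simp [corr, mul_conj', hc]

noncomputable def offPeakEnergy (c : ℕ → ℂ) (m : ℕ) : ℝ :=
  ∑ k ∈ Ico 1 m, normSq (corr c k (m - k))

theorem sum_range_normSq_corr {c : ℕ → ℂ} (hc : ∀ j, ‖c j‖ = 1) (m : ℕ) :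
    ∑ k ∈ range m, normSq (corr c k (m - k)) = m ^ 2 + offPeakEnergy c m := by
  rcases Nat.eq_zero_or_pos m with rfl | hm
  · simp [offPeakEnergy]
  rw [sum_range_eq_add_Ico _ hm, Nat.sub_zero, corr_zero hc, normSq_natCast, offPeakEnergy]
  ring

noncomputable def mixedMoment (c : ℕ → ℂ) (N M : ℕ) : ℂ :=
  ∑ q ∈ additiveQuadruples N N M M, c q.1.1 * conj (c q.1.2) * (c q.2.1 * conj (c q.2.2))

theorem mixedMoment_eq_sum_conj_corr_mul_corr (c : ℕ → ℂ) (N M : ℕ) :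
    mixedMoment c N M =
      ∑ d ∈ range N, conj (corr c d (N - d)) * corr c d (M - d) +
        ∑ d ∈ Ico 1 N, corr c d (N - d) * conj (corr c d (M - d)) := by
  rw [mixedMoment,
    sum_additiveQuadruples (fun a b => c a * conj (c b)) (fun a b => c a * conj (c b))]
  simp only [min_eq_left (Nat.sub_le _ _), min_eq_right (Nat.sub_le _ _), ← conj_corr]
  rfl

theorem mixedMoment_eq_sum_normSq (c : ℕ → ℂ) (N M : ℕ) :
    mixedMoment c N M =
      ∑ d ∈ range N, (normSq (corr c d (min (N - d) M)) : ℂ) +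
        ∑ d ∈ Ico 1 M, (normSq (corr c d (min N (M - d))) : ℂ) := by
  -- `a + b = a' + b'` read as `a - b' = a' - b`: the frequencies of `P_N · conj P_M`
  have hregroup : mixedMoment c N M =
      ∑ q ∈ additiveQuadruples N M M N, c q.1.1 * conj (c q.1.2) * (c q.2.1 * conj (c q.2.2)) := by
    refine sum_nbij' (fun q => ((q.1.1, q.2.2), q.2.1, q.1.2))
      (fun q => ((q.1.1, q.2.2), q.2.1, q.1.2)) ?_ ?_ (fun _ _ => rfl) (fun _ _ => rfl)
      fun _ _ => by ring
    all_goals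
      intro q h
      simp only [additiveQuadruples, mem_filter, mem_product, mem_range] at h ⊢
      omega
  rw [hregroup,
    sum_additiveQuadruples (fun a b => c a * conj (c b)) (fun a b => c a * conj (c b))]
  simp only [← conj_corr, min_comm M (N - _), min_comm (M - _) N]
  congr 1 <;> refine sum_congr rfl fun d _ => ?_
  · rw [normSq_eq_conj_mul_self]
    rfl
  · rw [← mul_conj]
    rfl

theorem mixedMoment_self {c : ℕ → ℂ} (hc : ∀ j, ‖c j‖ = 1) (m : ℕ) :
    mixedMoment c m m = ((m ^ 2 + 2 * offPeakEnergy c m : ℝ) : ℂ) := by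
  rw [mixedMoment_eq_sum_normSq, ← ofReal_sum, ← ofReal_sum]
  simp only [min_eq_left (Nat.sub_le _ _), min_eq_right (Nat.sub_le _ _)]
  rw [sum_range_normSq_corr hc]
  push_cast [offPeakEnergy]
  ring

theorem le_re_mixedMoment {c : ℕ → ℂ} (hc : ∀ j, ‖c j‖ = 1) {N M : ℕ} (hNM : N ≤ M) :
    N * M - 2 * (√(offPeakEnergy c N) * √(offPeakEnergy c M)) ≤ (mixedMoment c N M).re := by
  rcases Nat.eq_zero_or_pos N with rfl | hN
  · simp [mixedMoment, additiveQuadruples, offPeakEnergy]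
  have hre : (mixedMoment c N M).re =
      N * M + 2 * ∑ d ∈ Ico 1 N, (conj (corr c d (N - d)) * corr c d (M - d)).re := by
    have hsymm (a b : ℂ) : (a * conj b).re = (conj a * b).re := by
      simp only [mul_re, conj_re, conj_im]
      ring
    rw [mixedMoment_eq_sum_conj_corr_mul_corr, add_re, re_sum, re_sum, sum_range_eq_add_Ico _ hN,
      Nat.sub_zero, Nat.sub_zero, corr_zero hc, corr_zero hc]
    simp only [hsymm, map_natCast, ← Nat.cast_mul, natCast_re]
    push_cast
    ring
  have hCS := Real.sum_mul_le_sqrt_mul_sqrt (Ico 1 N) (fun d => ‖corr c d (N - d)‖)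
    (fun d => ‖corr c d (M - d)‖)
  simp only [Complex.sq_norm] at hCS
  have htail : ∑ d ∈ Ico 1 N, normSq (corr c d (M - d)) ≤ offPeakEnergy c M :=
    sum_le_sum_of_subset_of_nonneg (Ico_subset_Ico_right hNM) fun _ _ _ => normSq_nonneg _
  calc N * M - 2 * (√(offPeakEnergy c N) * √(offPeakEnergy c M))
      ≤ N * M - 2 * ∑ d ∈ Ico 1 N, ‖corr c d (N - d)‖ * ‖corr c d (M - d)‖ := by
        gcongr
        exact hCS.trans (mul_le_mul_of_nonneg_left (Real.sqrt_le_sqrt htail) (Real.sqrt_nonneg _))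
    _ ≤ (mixedMoment c N M).re := by
        rw [hre, sub_eq_add_neg, ← mul_neg, ← sum_neg_distrib]
        gcongr with d
        simpa [norm_mul] using neg_le_of_abs_le (abs_re_le_norm (conj (corr c d (N - d)) * _))

theorem re_mixedMoment_le {c : ℕ → ℂ} (hc : ∀ j, ‖c j‖ = 1) {N M : ℕ} (hN : 0 < N)
    (hNM : N ≤ M) :
    (mixedMoment c N M).re ≤
      N ^ 2 + offPeakEnergy c N + ∑ k ∈ Icc 1 (M - N), normSq (corr c k N) + offPeakEnergy c M := by
  rw [mixedMoment_eq_sum_normSq, ← ofReal_sum, ← ofReal_sum, ← ofReal_add, ofReal_re]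
  simp only [min_eq_left ((Nat.sub_le N _).trans hNM)]
  rw [sum_range_normSq_corr hc, ← sum_Ico_consecutive _ (show 1 ≤ M - N + 1 by omega)
    (show M - N + 1 ≤ M by omega), Ico_add_one_right_eq_Icc]
  have hwindow : ∑ k ∈ Icc 1 (M - N), normSq (corr c k (min N (M - k))) =
      ∑ k ∈ Icc 1 (M - N), normSq (corr c k N) :=
    sum_congr rfl fun k hk => by rw [min_eq_left (by rw [mem_Icc] at hk; omega)]
  have htail :
      ∑ k ∈ Ico (M - N + 1) M, normSq (corr c k (min N (M - k))) ≤ offPeakEnergy c M := by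
    rw [sum_congr rfl fun k hk => by rw [min_eq_right (by rw [mem_Ico] at hk; omega)]]
    exact sum_le_sum_of_subset_of_nonneg (Ico_subset_Ico_left (by omega))
      fun _ _ _ => normSq_nonneg _
  linarith

theorem le_sum_normSq_corr_of_offPeakEnergy_le {c : ℕ → ℂ} (hc : ∀ j, ‖c j‖ = 1) {N M : ℕ}
    (hN : 0 < N) (hNM : N ≤ M) (hflatN : offPeakEnergy c N ≤ N ^ 2 / 400)
    (hflatM : offPeakEnergy c M ≤ M ^ 2 / 400) :
    N * (M - N) - M ^ 2 / 100 ≤ ∑ k ∈ Icc 1 (M - N), normSq (corr c k N) := by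
  have hsqrt {m : ℕ} (hm : offPeakEnergy c m ≤ m ^ 2 / 400) : √(offPeakEnergy c m) ≤ m / 20 :=
    Real.sqrt_le_iff.mpr ⟨by positivity, by linarith⟩
  have hprod := mul_le_mul (hsqrt hflatN) (hsqrt hflatM) (Real.sqrt_nonneg _) (by positivity)
  have hlow := le_re_mixedMoment hc hNM
  have hup := re_mixedMoment_le hc hN hNM
  have hNM' : (N : ℝ) ≤ M := by exact_mod_cast hNM
  nlinarith

theorem sum_sum_Icc_le_sum_sum_Ico {f : ℕ → ℕ → ℝ} (hf : ∀ k N, 0 ≤ f k N) {a : ℕ} (ha : 0 < a)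
    (M : ℕ) :
    ∑ N ∈ Ico a M, ∑ k ∈ Icc 1 (M - N), f k N ≤ ∑ m ∈ Ioc a M, ∑ k ∈ Ico 1 m, f k (m - k) := by
  let shift : (Σ _ : ℕ, ℕ) → Σ _ : ℕ, ℕ := fun x => ⟨x.1 + x.2, x.2⟩
  have hinj : Set.InjOn shift ((Ico a M).sigma fun N => Icc 1 (M - N)) := by
    rintro ⟨N, k⟩ - ⟨N', k'⟩ - h
    simp only [shift, Sigma.mk.injEq, heq_eq_eq] at h ⊢
    omega
  rw [sum_sigma', sum_sigma']
  calc ∑ x ∈ (Ico a M).sigma fun N => Icc 1 (M - N), f x.2 x.1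
      = ∑ y ∈ ((Ico a M).sigma fun N => Icc 1 (M - N)).image shift, f y.2 (y.1 - y.2) := by
        rw [sum_image hinj]
        simp [shift]
    _ ≤ _ := by
        refine sum_le_sum_of_subset_of_nonneg ?_ fun _ _ _ => hf _ _
        rintro _ hy
        obtain ⟨⟨N, k⟩, hx, rfl⟩ := mem_image.mp hy
        simp only [mem_sigma, mem_Ico, mem_Icc, mem_Ioc, shift] at hx ⊢
        omega

theorem exists_offPeakEnergy_gt {c : ℕ → ℂ} (hc : ∀ j, ‖c j‖ = 1) (n : ℕ) :
    ∃ m, n ≤ m ∧ (m : ℝ) ^ 2 / 400 < offPeakEnergy c m := by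
  by_contra! hflat
  set K := n + 1
  set M := 8 * K
  have hK : (1 : ℝ) ≤ K := by exact_mod_cast Nat.succ_pos n
  have hM : (M : ℝ) = 8 * K := by push_cast [M]; ring
  have hwindow (N : ℕ) (hN : N ∈ Ico (2 * K) (4 * K)) :
      7 * (K : ℝ) ^ 2 ≤ ∑ k ∈ Icc 1 (M - N), normSq (corr c k N) := by
    rw [mem_Ico] at hN
    have h := le_sum_normSq_corr_of_offPeakEnergy_le hc (by omega) (by omega)
      (hflat N (by omega)) (hflat M (by omega))
    have hN₁ : 2 * (K : ℝ) ≤ N := by exact_mod_cast hN.1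
    have hN₂ : (N : ℝ) + 1 ≤ 4 * K := by exact_mod_cast hN.2
    nlinarith
  have hlower : 14 * (K : ℝ) ^ 3 ≤
      ∑ N ∈ Ico (2 * K) (4 * K), ∑ k ∈ Icc 1 (M - N), normSq (corr c k N) := by
    have := card_nsmul_le_sum _ _ _ hwindow
    rw [Nat.card_Ico, nsmul_eq_mul, show 4 * K - 2 * K = 2 * K by omega] at this
    push_cast at this
    linarith
  have hupper : ∑ N ∈ Ico (2 * K) (4 * K), ∑ k ∈ Icc 1 (M - N), normSq (corr c k N) ≤
      (M : ℝ) ^ 3 / 400 :=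
    calc _ ≤ ∑ N ∈ Ico K M, ∑ k ∈ Icc 1 (M - N), normSq (corr c k N) :=
          sum_le_sum_of_subset_of_nonneg (Ico_subset_Ico (by omega) (by omega))
            fun _ _ _ => sum_nonneg fun _ _ => normSq_nonneg _
      _ ≤ ∑ m ∈ Ioc K M, offPeakEnergy c m :=
          sum_sum_Icc_le_sum_sum_Ico (fun _ _ => normSq_nonneg _) (by omega) M
      _ ≤ #(Ioc K M) • ((M : ℝ) ^ 2 / 400) := by
          refine sum_le_card_nsmul _ _ _ fun m hm => (hflat m ?_).trans ?_ <;> rw [mem_Ioc] at hm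
          · omega
          · gcongr
            exact_mod_cast hm.2
      _ ≤ M * ((M : ℝ) ^ 2 / 400) := by
          rw [Nat.card_Ioc, nsmul_eq_mul]
          gcongr
          exact_mod_cast Nat.sub_le M K
      _ = (M : ℝ) ^ 3 / 400 := by ring
  have hK3 : (0 : ℝ) < K ^ 3 := by positivity
  rw [hM] at hupper
  nlinarith

theorem integral_exp_mul_I_zpow (k : ℤ) :
    ∫ t in (0 : ℝ)..2 * Real.pi, exp (I * t) ^ k =
      if k = 0 then ((2 * Real.pi : ℝ) : ℂ) else 0 := by
  split_ifs with hk
  · simp [hk]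
  have hkI : (k * I : ℂ) ≠ 0 := mul_ne_zero (Int.cast_ne_zero.mpr hk) I_ne_zero
  simp_rw [← exp_int_mul, ← mul_assoc]
  rw [integral_exp_mul_complex hkI]
  have : (k * I * ((2 * Real.pi : ℝ) : ℂ)) = k * (2 * Real.pi * I) := by push_cast; ring
  rw [this, exp_int_mul_two_pi_mul_I]
  simp

theorem integral_sum_mul_exp_mul_I_zpow {ι : Type*} (s : Finset ι) (w : ι → ℂ) (ν : ι → ℤ) :
    ∫ t in (0 : ℝ)..2 * Real.pi, ∑ i ∈ s, w i * exp (I * t) ^ ν i =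
      2 * Real.pi * ∑ i ∈ s with ν i = 0, w i := by
  have hcont (i : ι) : Continuous fun t : ℝ => w i * exp (I * t) ^ ν i :=
    continuous_const.mul
      ((continuous_exp.comp (by fun_prop)).zpow₀ _ fun _ => Or.inl (exp_ne_zero _))
  rw [intervalIntegral.integral_finsetSum fun i _ => (hcont i).intervalIntegrable _ _,
    sum_filter, mul_sum]
  refine sum_congr rfl fun i _ => ?_
  rw [intervalIntegral.integral_const_mul, integral_exp_mul_I_zpow]
  split_ifs <;> push_cast <;> ring

noncomputable def trigPoly (c : ℕ → ℂ) (m : ℕ) (t : ℝ) : ℂ :=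
  ∑ j ∈ range m, c j * exp (I * t) ^ j

theorem trigPoly_mul_conj (c : ℕ → ℂ) (N : ℕ) (t : ℝ) :
    trigPoly c N t * conj (trigPoly c N t) =
      ∑ p ∈ range N ×ˢ range N, c p.1 * conj (c p.2) * exp (I * t) ^ ((p.1 : ℤ) - p.2) := by
  have hconj : conj (exp (I * t)) = (exp (I * t))⁻¹ := by
    rw [← exp_conj, map_mul, conj_I, conj_ofReal, neg_mul, exp_neg]
  rw [trigPoly, map_sum, sum_mul_sum, sum_product]
  refine sum_congr rfl fun a _ => sum_congr rfl fun b _ => ?_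
  rw [map_mul, map_pow, hconj, zpow_sub₀ (exp_ne_zero _), zpow_natCast, zpow_natCast, inv_pow]
  ring

theorem ofReal_norm_trigPoly_sq_mul_sq (c : ℕ → ℂ) (N M : ℕ) (t : ℝ) :
    ((‖trigPoly c N t‖ ^ 2 * ‖trigPoly c M t‖ ^ 2 : ℝ) : ℂ) =
      ∑ q ∈ (range N ×ˢ range N) ×ˢ range M ×ˢ range M,
        c q.1.1 * conj (c q.1.2) * (c q.2.1 * conj (c q.2.2)) *
          exp (I * t) ^ ((q.1.1 : ℤ) - q.1.2 + (q.2.1 - q.2.2)) := by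
  push_cast
  rw [← mul_conj', ← mul_conj', trigPoly_mul_conj, trigPoly_mul_conj, sum_mul_sum,
    sum_product (range N ×ˢ range N)]
  refine sum_congr rfl fun p _ => sum_congr rfl fun q _ => ?_
  rw [zpow_add₀ (exp_ne_zero _)]
  ring

theorem integral_norm_trigPoly_sq_mul_sq (c : ℕ → ℂ) (N M : ℕ) :
    1 / (2 * Real.pi) * ∫ t in (0 : ℝ)..2 * Real.pi, ‖trigPoly c N t‖ ^ 2 * ‖trigPoly c M t‖ ^ 2 =
      (mixedMoment c N M).re := by
  have h := integral_sum_mul_exp_mul_I_zpow ((range N ×ˢ range N) ×ˢ range M ×ˢ range M)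
    (fun q => c q.1.1 * conj (c q.1.2) * (c q.2.1 * conj (c q.2.2)))
    (fun q => (q.1.1 : ℤ) - q.1.2 + (q.2.1 - q.2.2))
  have hquad : ((range N ×ˢ range N) ×ˢ range M ×ˢ range M).filter
      (fun q => (q.1.1 : ℤ) - q.1.2 + (q.2.1 - q.2.2) = 0) = additiveQuadruples N N M M :=
    filter_congr fun q _ => by omega
  simp_rw [← ofReal_norm_trigPoly_sq_mul_sq, intervalIntegral.integral_ofReal, hquad] at h
  rw [mixedMoment, ← ofReal_re (∫ t in (0 : ℝ)..2 * Real.pi, _), h, ← ofReal_ofNat, ← ofReal_mul,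
    re_ofReal_mul]
  field_simp

theorem integral_norm_trigPoly_pow_four {c : ℕ → ℂ} (hc : ∀ j, ‖c j‖ = 1) (m : ℕ) :
    1 / (2 * Real.pi) * ∫ t in (0 : ℝ)..2 * Real.pi, ‖trigPoly c m t‖ ^ 4 =
      m ^ 2 + 2 * offPeakEnergy c m := by
  simp_rw [show ∀ t, ‖trigPoly c m t‖ ^ 4 = ‖trigPoly c m t‖ ^ 2 * ‖trigPoly c m t‖ ^ 2 from
    fun _ => by ring]
  rw [integral_norm_trigPoly_sq_mul_sq, mixedMoment_self hc, ofReal_re]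

theorem rpow_quarter_mul_sqrt {a x : ℝ} (ha : 0 ≤ a) (hx : 0 ≤ x) :
    a ^ ((1 : ℝ) / 4) * √x = (a * x ^ 2) ^ ((1 : ℝ) / 4) := by
  rw [Real.mul_rpow ha (by positivity), Real.sqrt_eq_rpow, ← Real.rpow_natCast,
    ← Real.rpow_mul hx]
  norm_num

/-- There is an absolute constant `C > 1` such that for every
unimodular sequence `(c_j)` and every `n`, some `m ≥ n` satisfies
`‖∑_{j<m} c_j z^j‖₄ > C √m` (norm over the circle with normalized measure). -/
theorem statement19 :
    ∃ C : ℝ, 1 < C ∧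
      ∀ c : ℕ → ℂ, (∀ j : ℕ, ‖c j‖ = 1) →
        ∀ n : ℕ, ∃ m : ℕ, n ≤ m ∧
          C * Real.sqrt m <
            ((1 / (2 * Real.pi)) *
                ∫ t in (0:ℝ)..(2 * Real.pi),
                  ‖(∑ j ∈ Finset.range m, c j * Complex.exp (Complex.I * (t : ℂ)) ^ j)‖ ^ 4) ^
              ((1:ℝ) / 4) := by
  refine ⟨(201 / 200) ^ ((1 : ℝ) / 4), Real.one_lt_rpow (by norm_num) (by norm_num),
    fun c hc n => ?_⟩
  obtain ⟨m, hnm, hm⟩ := exists_offPeakEnergy_gt hc n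
  refine ⟨m, hnm, ?_⟩
  calc (201 / 200) ^ ((1 : ℝ) / 4) * √m = (201 / 200 * (m : ℝ) ^ 2) ^ ((1 : ℝ) / 4) :=
        rpow_quarter_mul_sqrt (by norm_num) m.cast_nonneg
    _ < (m ^ 2 + 2 * offPeakEnergy c m) ^ ((1 : ℝ) / 4) :=
        Real.rpow_lt_rpow (by positivity) (by linarith) (by norm_num)
    _ = _ := by rw [← integral_norm_trigPoly_pow_four hc m]; rfl
end
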